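/- Cosphere-bundle parameterization: fix β ∈ ℝ, a ∈ ℝ with a ≠ 0, and C > 0. Let r(t) := |γ_{β,a}(t)| (then r(t) > 0 for all t) and x̃(t) := C(1−r(t))/(1+r(t)). Then (i) lim_{t→+∞} x̃′(t)/x̃(t) = −1 and lim_{t→−∞} x̃′(t)/x̃(t) = +1; and (ii) for all t ∈ ℝ, ((C² − x̃(t)²)/(2C))² · Im( γ′_{β,a}(t)/γ_{β,a}(t) ) / x̃(t)² = −a, where γ′_{β,a}(t) denotes the complex derivative in t; in particular the left-hand side of (ii) is constant in t. -/

import Mathlib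

/-!
Write `s = x̂(t) ∈ (-1, 1)` and `γ = e^{iβ} N(s) / D(s)`. Then `r² = |N|² / |D|²` with
`|D|² - |N|² = 4(1 - s²)`, and since the Möbius matrix of `N / D` has determinant `-4`,
`γ'/γ = -4 ṡ / (N D)` with `ṡ = (1 - s²)/2`. Taking imaginary parts gives
`Im(γ'/γ) = -a (1 - r²)² / (4 r²)`, while `((C² - x̃²)/(2C))² / x̃² = 4 r² / (1 - r²)²`.
Differentiating `x̃ = C(1 - r)/(1 + r)` shows that `x̃'/x̃` is a continuous function of `s`
(for `a ≠ 0` the geodesic avoids the origin), equal to `∓1` at `s = ±1`, the limits of `x̂`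
at `±∞`.
-/

noncomputable section

/-- `x̂(t) = tanh(t/2)`. -/
def xhat (t : ℝ) : ℝ := Real.tanh (t / 2)

/-- Horocyclic parameterization of hyperbolic geodesics in the Poincaré disk. -/
def γH (β a t : ℝ) : ℂ :=
  Complex.exp (Complex.I * (β : ℂ)) *
    (((2 + Complex.I * (a : ℂ)) * (xhat t : ℂ) + Complex.I * (a : ℂ)) /
      (Complex.I * (a : ℂ) * (xhat t : ℂ) - 2 + Complex.I * (a : ℂ)))

/-- The geodesic boundary defining function pulled back along the geodesic:
`x̃(t) = C(1−r(t))/(1+r(t))` where `r(t) = |γ_{β,a}(t)|`. -/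
def xtilde (C β a t : ℝ) : ℝ :=
  C * (1 - ‖γH β a t‖) / (1 + ‖γH β a t‖)

open Real Filter Topology

lemma hasDerivAt_one_sub_div_one_add_sqrt {R : ℝ → ℝ} {R' t : ℝ} (C : ℝ)
    (hR : HasDerivAt R R' t) (hR0 : 0 < R t) :
    HasDerivAt (fun t => C * (1 - √(R t)) / (1 + √(R t)))
      (-C * R' / (√(R t) * (1 + √(R t)) ^ 2)) t := by
  have hρ := hR.sqrt hR0.ne'
  have hρ0 := sqrt_pos.mpr hR0
  refine (((hρ.const_sub 1).const_mul C).div (hρ.const_add 1) (by positivity)).congr_deriv ?_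
  field_simp
  ring

lemma cosphere_factor_eq {C r : ℝ} (hC : C ≠ 0) (h₁ : 1 + r ≠ 0) (h₂ : 1 - r ≠ 0) :
    ((C ^ 2 - (C * (1 - r) / (1 + r)) ^ 2) / (2 * C)) ^ 2 / (C * (1 - r) / (1 + r)) ^ 2 =
      4 * r ^ 2 / (1 - r ^ 2) ^ 2 := by
  have : 1 - r ^ 2 ≠ 0 := by
    rw [show 1 - r ^ 2 = (1 + r) * (1 - r) by ring]
    exact mul_ne_zero h₁ h₂
  field_simp
  ring

lemma xhat_eq (t : ℝ) : xhat t = (exp t - 1) / (exp t + 1) := by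
  have h : exp t = exp (t / 2) ^ 2 := by rw [← exp_nat_mul]; ring_nf
  have := exp_pos (t / 2)
  rw [xhat, tanh_eq_sinh_div_cosh, sinh_eq, cosh_eq, h, exp_neg]
  field_simp

lemma xhat_sq_lt_one (t : ℝ) : xhat t ^ 2 < 1 := tanh_sq_lt_one _

lemma hasDerivAt_xhat (t : ℝ) : HasDerivAt xhat ((1 - xhat t ^ 2) / 2) t := by
  have h : HasDerivAt (fun x => (exp x - 1) / (exp x + 1)) _ t :=
    ((hasDerivAt_exp t).sub_const 1).div ((hasDerivAt_exp t).add_const 1) (by positivity)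
  rw [funext xhat_eq]
  convert h using 1
  field_simp
  ring

lemma tendsto_xhat_atTop : Tendsto xhat atTop (𝓝 1) := by
  have h : Tendsto (fun t => 1 - 2 / (exp t + 1)) atTop (𝓝 (1 - 0)) :=
    (((tendsto_exp_atTop.atTop_add tendsto_const_nhds).const_div_atTop 2)).const_sub 1
  rw [sub_zero] at h
  refine h.congr fun t => ?_
  rw [xhat_eq]
  field_simp
  ring

lemma tendsto_xhat_atBot : Tendsto xhat atBot (𝓝 (-1)) := by
  have h : Tendsto (fun t => (exp t - 1) / (exp t + 1)) atBot (𝓝 ((0 - 1) / (0 + 1))) :=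
    ((tendsto_exp_atBot.sub_const 1).div (tendsto_exp_atBot.add_const 1) (by norm_num))
  norm_num at h
  exact h.congr fun t => (xhat_eq t).symm

def γNum (a s : ℝ) : ℂ := (2 + Complex.I * a) * s + Complex.I * a

def γDen (a s : ℝ) : ℂ := Complex.I * a * s - 2 + Complex.I * a

lemma γH_eq (β a t : ℝ) :
    γH β a t = Complex.exp (Complex.I * β) * (γNum a (xhat t) / γDen a (xhat t)) := rfl

lemma γNum_eq_mk (a s : ℝ) : γNum a s = ⟨2 * s, a * s + a⟩ := by
  apply Complex.ext <;> simp [γNum]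

lemma γDen_eq_mk (a s : ℝ) : γDen a s = ⟨-2, a * s + a⟩ := by
  apply Complex.ext <;> simp [γDen]

lemma normSq_γNum (a s : ℝ) :
    Complex.normSq (γNum a s) = 4 * s ^ 2 + a ^ 2 * (1 + s) ^ 2 := by
  rw [γNum_eq_mk, Complex.normSq_mk]
  ring

lemma normSq_γDen (a s : ℝ) : Complex.normSq (γDen a s) = 4 + a ^ 2 * (1 + s) ^ 2 := by
  rw [γDen_eq_mk, Complex.normSq_mk]
  ring

lemma im_γNum_mul_γDen (a s : ℝ) : (γNum a s * γDen a s).im = -2 * a * (1 - s ^ 2) := by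
  rw [γNum_eq_mk, γDen_eq_mk, Complex.mul_im]
  ring

lemma γDen_mul_sub_γNum_mul (a s : ℝ) :
    (2 + Complex.I * a) * γDen a s - Complex.I * a * γNum a s = -4 := by
  simp only [γNum, γDen]
  ring

lemma γDen_ne_zero (a s : ℝ) : γDen a s ≠ 0 := by
  rw [← Complex.normSq_pos, normSq_γDen]
  positivity

lemma γNum_ne_zero {a : ℝ} (ha : a ≠ 0) (s : ℝ) : γNum a s ≠ 0 := by
  rw [← Complex.normSq_pos, normSq_γNum]
  rcases eq_or_ne s 0 with rfl | hs
  · simpa using pow_pos (abs_pos.mpr ha) 2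
  · positivity

lemma γH_ne_zero {a : ℝ} (ha : a ≠ 0) (β t : ℝ) : γH β a t ≠ 0 :=
  mul_ne_zero (Complex.exp_ne_zero _) (div_ne_zero (γNum_ne_zero ha _) (γDen_ne_zero _ _))

def sqRadius (a s : ℝ) : ℝ := (4 * s ^ 2 + a ^ 2 * (1 + s) ^ 2) / (4 + a ^ 2 * (1 + s) ^ 2)

lemma norm_γH_sq (β a t : ℝ) : ‖γH β a t‖ ^ 2 = sqRadius a (xhat t) := by
  rw [Complex.sq_norm, γH_eq, map_mul, map_div₀, normSq_γNum, normSq_γDen, mul_comm Complex.I,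
    Complex.normSq_eq_norm_sq, Complex.norm_exp_ofReal_mul_I, one_pow, one_mul, sqRadius]

lemma one_sub_sqRadius (a s : ℝ) :
    1 - sqRadius a s = 4 * (1 - s ^ 2) / (4 + a ^ 2 * (1 + s) ^ 2) := by
  rw [sqRadius]
  field_simp
  ring

lemma sqRadius_pos {a : ℝ} (ha : a ≠ 0) (s : ℝ) : 0 < sqRadius a s := by
  rw [sqRadius, ← normSq_γNum]
  exact div_pos (Complex.normSq_pos.mpr (γNum_ne_zero ha s)) (by positivity)

lemma hasDerivAt_sqRadius (a s : ℝ) :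
    HasDerivAt (sqRadius a)
      (8 * (4 * s + a ^ 2 * (1 + s) ^ 2) / (4 + a ^ 2 * (1 + s) ^ 2) ^ 2) s := by
  have hP : HasDerivAt (fun s => 4 * s ^ 2 + a ^ 2 * (1 + s) ^ 2)
      (8 * s + 2 * a ^ 2 * (1 + s)) s := by
    refine ((((hasDerivAt_id' s).pow 2).const_mul 4).add
      ((((hasDerivAt_id' s).const_add 1).pow 2).const_mul (a ^ 2))).congr_deriv ?_
    norm_num
    ring
  have hQ : HasDerivAt (fun s => 4 + a ^ 2 * (1 + s) ^ 2) (2 * a ^ 2 * (1 + s)) s := by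
    refine ((((hasDerivAt_id' s).const_add 1).pow 2).const_mul (a ^ 2) |>.const_add 4)
      |>.congr_deriv ?_
    norm_num
    ring
  refine (hP.div hQ (by positivity)).congr_deriv ?_
  field_simp
  ring

lemma continuous_sqRadius (a : ℝ) : Continuous (sqRadius a) :=
  Continuous.div (by fun_prop) (by fun_prop) fun s => by positivity

lemma norm_γH (β a t : ℝ) : ‖γH β a t‖ = √(sqRadius a (xhat t)) := by
  rw [← norm_γH_sq, sqrt_sq (norm_nonneg _)]

lemma norm_γH_lt_one (β a t : ℝ) : ‖γH β a t‖ < 1 := by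
  have h : 0 < 1 - ‖γH β a t‖ ^ 2 := by
    have := sub_pos.mpr (xhat_sq_lt_one t)
    rw [norm_γH_sq, one_sub_sqRadius]
    positivity
  nlinarith [norm_nonneg (γH β a t)]

lemma hasDerivAt_γH (β a t : ℝ) :
    HasDerivAt (γH β a)
      (Complex.exp (Complex.I * β) *
        (-4 * ((1 - xhat t ^ 2) / 2 : ℝ) / γDen a (xhat t) ^ 2)) t := by
  have hs : HasDerivAt (fun t => (xhat t : ℂ)) ((1 - xhat t ^ 2) / 2 : ℝ) t :=
    (hasDerivAt_xhat t).ofReal_comp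
  have hN : HasDerivAt (fun t => γNum a (xhat t))
      ((2 + Complex.I * a) * ((1 - xhat t ^ 2) / 2 : ℝ)) t :=
    (hs.const_mul _).add_const _
  have hD : HasDerivAt (fun t => γDen a (xhat t))
      (Complex.I * a * ((1 - xhat t ^ 2) / 2 : ℝ)) t :=
    ((hs.const_mul _).sub_const _).add_const _
  refine ((hN.div hD (γDen_ne_zero a _)).const_mul _).congr_deriv ?_
  rw [← γDen_mul_sub_γNum_mul a (xhat t)]
  ring

lemma deriv_γH_div_γH {a : ℝ} (ha : a ≠ 0) (β t : ℝ) :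
    deriv (γH β a) t / γH β a t =
      ((-2 * (1 - xhat t ^ 2) : ℝ) : ℂ) / (γNum a (xhat t) * γDen a (xhat t)) := by
  have := γNum_ne_zero ha (xhat t)
  have := γDen_ne_zero a (xhat t)
  rw [(hasDerivAt_γH β a t).deriv, γH_eq]
  field_simp [Complex.exp_ne_zero]
  push_cast
  ring

lemma im_deriv_γH_div_γH {a : ℝ} (ha : a ≠ 0) (β t : ℝ) :
    (deriv (γH β a) t / γH β a t).im =
      -a * (1 - ‖γH β a t‖ ^ 2) ^ 2 / (4 * ‖γH β a t‖ ^ 2) := by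
  have := γNum_ne_zero ha (xhat t)
  rw [← Complex.normSq_pos, normSq_γNum] at this
  rw [deriv_γH_div_γH ha, div_eq_mul_inv, Complex.im_ofReal_mul, Complex.inv_im,
    im_γNum_mul_γDen, map_mul, normSq_γNum, normSq_γDen, norm_γH_sq, one_sub_sqRadius, sqRadius]
  field_simp
  ring

def xtildeLogDeriv (a s : ℝ) : ℝ :=
  -(4 * s + a ^ 2 * (1 + s) ^ 2) / ((4 + a ^ 2 * (1 + s) ^ 2) * √(sqRadius a s))

lemma xtilde_eq_sqrt (C β a t : ℝ) :
    xtilde C β a t = C * (1 - √(sqRadius a (xhat t))) / (1 + √(sqRadius a (xhat t))) := by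
  rw [xtilde, norm_γH]

lemma deriv_xtilde_div_xtilde {a : ℝ} (ha : a ≠ 0) {C : ℝ} (hC : C ≠ 0) (β t : ℝ) :
    deriv (xtilde C β a) t / xtilde C β a t = xtildeLogDeriv a (xhat t) := by
  have hR := (hasDerivAt_sqRadius a (xhat t)).comp t (hasDerivAt_xhat t)
  have hx := (hasDerivAt_one_sub_div_one_add_sqrt C hR (sqRadius_pos ha _)).congr_of_eventuallyEq
    (Eventually.of_forall (xtilde_eq_sqrt C β a))
  have hρ : 0 < √(sqRadius a (xhat t)) := sqrt_pos.mpr (sqRadius_pos ha _)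
  have hρ1 : 1 - √(sqRadius a (xhat t)) ≠ 0 := by
    rw [← norm_γH]; exact (sub_pos.mpr (norm_γH_lt_one β a t)).ne'
  have hρ_sq : 1 - √(sqRadius a (xhat t)) ^ 2 =
      4 * (1 - xhat t ^ 2) / (4 + a ^ 2 * (1 + xhat t) ^ 2) := by
    rw [sq_sqrt (sqRadius_pos ha _).le, one_sub_sqRadius]
  rw [hx.deriv, xtilde_eq_sqrt, Function.comp_apply, xtildeLogDeriv]
  generalize √(sqRadius a (xhat t)) = ρ at *
  generalize xhat t = s at *
  rw [eq_div_iff (by positivity)] at hρ_sq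
  field_simp
  linear_combination (2 * (4 * s + a ^ 2 * (1 + s) ^ 2)) * hρ_sq

lemma continuous_xtildeLogDeriv {a : ℝ} (ha : a ≠ 0) : Continuous (xtildeLogDeriv a) := by
  have := continuous_sqRadius a
  refine Continuous.div (by fun_prop) (by fun_prop) fun s => ?_
  have := sqrt_pos.mpr (sqRadius_pos ha s)
  positivity

lemma xtildeLogDeriv_one (a : ℝ) : xtildeLogDeriv a 1 = -1 := by
  have : (0 : ℝ) < 4 + a ^ 2 * (1 + 1) ^ 2 := by positivity
  rw [xtildeLogDeriv, sqRadius, one_pow, mul_one, div_self this.ne', sqrt_one, mul_one, neg_div,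
    div_self this.ne']

lemma xtildeLogDeriv_neg_one (a : ℝ) : xtildeLogDeriv a (-1) = 1 := by
  norm_num [xtildeLogDeriv, sqRadius]

/-- Cosphere-bundle parameterization: for `a ≠ 0` and `C > 0`, letting
`r(t) = |γ_{β,a}(t)| > 0` and `x̃(t) = C(1−r(t))/(1+r(t))`, one has
(i) `x̃′/x̃ → −1` as `t → +∞` and `x̃′/x̃ → +1` as `t → −∞`; and
(ii) `((C² − x̃(t)²)/(2C))² · Im(γ′_{β,a}(t)/γ_{β,a}(t)) / x̃(t)² = −a` for all `t`. -/
theorem cosphere_parameterization (β a : ℝ) (ha : a ≠ 0) (C : ℝ) (hC : 0 < C) :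
    (∀ t : ℝ, 0 < ‖γH β a t‖) ∧
    Filter.Tendsto (fun t : ℝ => deriv (xtilde C β a) t / xtilde C β a t)
      Filter.atTop (nhds (-1)) ∧
    Filter.Tendsto (fun t : ℝ => deriv (xtilde C β a) t / xtilde C β a t)
      Filter.atBot (nhds 1) ∧
    ∀ t : ℝ,
      ((C ^ 2 - xtilde C β a t ^ 2) / (2 * C)) ^ 2 *
          (deriv (γH β a) t / γH β a t).im / xtilde C β a t ^ 2 = -a := by
  have hr₀ (t : ℝ) : 0 < ‖γH β a t‖ := norm_pos_iff.mpr (γH_ne_zero ha β t)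
  have hlog : (fun t => deriv (xtilde C β a) t / xtilde C β a t) = xtildeLogDeriv a ∘ xhat :=
    funext (deriv_xtilde_div_xtilde ha hC.ne' β)
  refine ⟨hr₀, ?_, ?_, fun t => ?_⟩
  · rw [hlog, ← xtildeLogDeriv_one a]
    exact (continuous_xtildeLogDeriv ha).continuousAt.tendsto.comp tendsto_xhat_atTop
  · rw [hlog, ← xtildeLogDeriv_neg_one a]
    exact (continuous_xtildeLogDeriv ha).continuousAt.tendsto.comp tendsto_xhat_atBot
  · have hr₁ := norm_γH_lt_one β a t
    have : 1 - ‖γH β a t‖ ^ 2 ≠ 0 := by nlinarith [hr₀ t]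
    rw [mul_div_right_comm, xtilde, cosphere_factor_eq hC.ne' (by linarith [hr₀ t]) (by linarith),
      im_deriv_γH_div_γH ha]
    field_simp [(hr₀ t).ne']
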